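/- Let ℓ < i be real numbers, let ρ : [ℓ, i] → (0,∞) be continuous, set β(y) = ∫_ℓ^y √(ρ(v)) dv, and let H : [ℓ, i] → (0,∞) be continuously differentiable with H' > 0. If H'(z) / ( H(z) e^{H(z)} ) = D √(ρ(z)) for all z ∈ [ℓ, i], for some constant D > 0, then D = ( φ(H(ℓ)) − φ(H(i)) ) / β(i) and ∫_ℓ^i ρ(z) H(z) e^{H(z)} / H'(z) dz = β(i)² / ( φ(H(ℓ)) − φ(H(i)) ); that is, the Cauchy–Schwarz lower bound is attained. -/

import Mathlib

/-!
The Euler–Lagrange relation says `H' = D √ρ · H e^H`. Integrating `D √ρ = H' / (H e^H)`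
over `[ℓ, i]` and substituting `u = H z` gives
`D β(i) = ∫_{H ℓ}^{H i} du / (u e^u) = φ(H ℓ) - φ(H i)`.
The same relation collapses the integrand `ρ H e^H / H'` to `√ρ / D`, so the integral is
`β(i) / D = β(i)² / (φ(H ℓ) - φ(H i))`.
-/

open MeasureTheory Set intervalIntegral Real

lemma continuousOn_one_div_mul_exp : ContinuousOn (fun u : ℝ => 1 / (u * exp u)) (Ioi 0) :=
  continuousOn_const.div (continuousOn_id.mul continuous_exp.continuousOn)
    fun u hu => (mul_pos hu (exp_pos u)).ne'

lemma integrableOn_one_div_mul_exp_Ioi {a : ℝ} (ha : 0 < a) :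
    IntegrableOn (fun u : ℝ => 1 / (u * exp u)) (Ioi a) := by
  refine ((exp_neg_integrableOn_Ioi a one_pos).const_mul a⁻¹).mono' ?_ ?_
  · exact (continuousOn_one_div_mul_exp.mono (Ioi_subset_Ioi ha.le)).aestronglyMeasurable
      measurableSet_Ioi
  · filter_upwards [ae_restrict_mem measurableSet_Ioi] with u (hu : a < u)
    rw [norm_of_nonneg (by have := ha.trans hu; positivity), neg_one_mul, exp_neg, one_div,
      mul_inv]
    gcongr

lemma integral_comp_mul_deriv_of_hasDerivWithinAt_Icc {a b : ℝ} {f f' g : ℝ → ℝ}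
    (hab : a ≤ b) (hf : ∀ x ∈ Icc a b, HasDerivWithinAt f (f' x) (Icc a b) x)
    (hf' : ContinuousOn f' (Icc a b)) (hg : ContinuousOn g (f '' Icc a b)) :
    ∫ x in a..b, g (f x) * f' x = ∫ u in f a..f b, g u := by
  rw [← uIcc_of_le hab] at hf' hg
  refine integral_comp_mul_deriv'' ?_ ?_ hf' hg
  · rw [uIcc_of_le hab]
    exact fun x hx => (hf x hx).continuousWithinAt
  · rw [min_eq_left hab, max_eq_right hab]
    exact fun x hx => (hf x (Ioo_subset_Icc_self hx)).mono_of_mem_nhdsWithin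
      (Icc_mem_nhdsGT_of_mem ⟨hx.1.le, hx.2⟩)

lemma mul_mul_exp_div_eq_sqrt_div {r h h' D : ℝ} (hr : 0 ≤ r) (hh : h ≠ 0)
    (hEL : h' / (h * exp h) = D * √r) :
    r * h * exp h / h' = √r / D := by
  rw [div_eq_iff (by positivity)] at hEL
  rcases eq_or_ne r 0 with rfl | hr0
  · simp
  · have : √r ≠ 0 := by positivity
    rw [hEL]
    field_simp
    rw [sq_sqrt hr]

theorem stmt_14_general
    (φ : ℝ → ℝ) (hφ : ∀ x : ℝ, φ x = ∫ u in Set.Ioi x, 1 / (u * Real.exp u))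
    (ℓ i : ℝ) (hℓi : ℓ < i) (ρ H H' : ℝ → ℝ) (D : ℝ) (hD : 0 < D)
    (hρc : ContinuousOn ρ (Set.Icc ℓ i))
    (hρpos : ∀ z ∈ Set.Icc ℓ i, 0 < ρ z)
    (hH : ∀ z ∈ Set.Icc ℓ i, HasDerivWithinAt H (H' z) (Set.Icc ℓ i) z)
    (hH'c : ContinuousOn H' (Set.Icc ℓ i))
    (hHpos : ∀ z ∈ Set.Icc ℓ i, 0 < H z)
    (hEL : ∀ z ∈ Set.Icc ℓ i,
      H' z / (H z * Real.exp (H z)) = D * Real.sqrt (ρ z)) :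
    D = (φ (H ℓ) - φ (H i)) / (∫ v in ℓ..i, Real.sqrt (ρ v)) ∧
    ∫ z in ℓ..i, ρ z * H z * Real.exp (H z) / H' z =
      (∫ v in ℓ..i, Real.sqrt (ρ v)) ^ 2 / (φ (H ℓ) - φ (H i)) := by
  have hIcc : uIcc ℓ i = Icc ℓ i := uIcc_of_le hℓi.le
  have hℓ_mem : ℓ ∈ Icc ℓ i := left_mem_Icc.2 hℓi.le
  have hi_mem : i ∈ Icc ℓ i := right_mem_Icc.2 hℓi.le
  set β := ∫ v in ℓ..i, √(ρ v) with hβ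
  have hβpos : 0 < β := by
    refine intervalIntegral_pos_of_pos_on ?_ (fun z hz => ?_) hℓi
    · exact (hIcc ▸ continuous_sqrt.comp_continuousOn hρc).intervalIntegrable
    · exact sqrt_pos.2 (hρpos z (Ioo_subset_Icc_self hz))
  have hφ_sub : D * β = φ (H ℓ) - φ (H i) := by
    have hg : ContinuousOn (fun u : ℝ => 1 / (u * exp u)) (H '' Icc ℓ i) :=
      continuousOn_one_div_mul_exp.mono (by rintro _ ⟨z, hz, rfl⟩; exact hHpos z hz)
    rw [hφ, hφ, integral_Ioi_sub_Ioi' (integrableOn_one_div_mul_exp_Ioi (hHpos ℓ hℓ_mem))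
      (integrableOn_one_div_mul_exp_Ioi (hHpos i hi_mem)),
      ← integral_comp_mul_deriv_of_hasDerivWithinAt_Icc hℓi.le hH hH'c hg, hβ,
      ← intervalIntegral.integral_const_mul]
    refine integral_congr fun z hz => ?_
    rw [hIcc] at hz
    simp only [← hEL z hz, one_div_mul_eq_div]
  have hintegral : ∫ z in ℓ..i, ρ z * H z * exp (H z) / H' z = β / D := by
    rw [hβ, ← intervalIntegral.integral_div]
    refine integral_congr fun z hz => ?_
    rw [hIcc] at hz
    exact mul_mul_exp_div_eq_sqrt_div (hρpos z hz).le (hHpos z hz).ne' (hEL z hz)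
  refine ⟨?_, ?_⟩
  · rw [← hφ_sub]
    field_simp
  · rw [hintegral, ← hφ_sub]
    field_simp

theorem stmt_14
    (φ : ℝ → ℝ) (hφ : ∀ x : ℝ, φ x = ∫ u in Set.Ioi x, 1 / (u * Real.exp u))
    (ℓ i : ℝ) (hℓi : ℓ < i) (ρ H H' : ℝ → ℝ) (D : ℝ) (hD : 0 < D)
    (hρc : ContinuousOn ρ (Set.Icc ℓ i))
    (hρpos : ∀ z ∈ Set.Icc ℓ i, 0 < ρ z)
    (hH : ∀ z ∈ Set.Icc ℓ i, HasDerivWithinAt H (H' z) (Set.Icc ℓ i) z)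
    (hH'c : ContinuousOn H' (Set.Icc ℓ i))
    (hHpos : ∀ z ∈ Set.Icc ℓ i, 0 < H z)
    (hH'pos : ∀ z ∈ Set.Icc ℓ i, 0 < H' z)
    (hEL : ∀ z ∈ Set.Icc ℓ i,
      H' z / (H z * Real.exp (H z)) = D * Real.sqrt (ρ z)) :
    D = (φ (H ℓ) - φ (H i)) / (∫ v in ℓ..i, Real.sqrt (ρ v)) ∧
    ∫ z in ℓ..i, ρ z * H z * Real.exp (H z) / H' z =
      (∫ v in ℓ..i, Real.sqrt (ρ v)) ^ 2 / (φ (H ℓ) - φ (H i)) :=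
  stmt_14_general φ hφ ℓ i hℓi ρ H H' D hD hρc hρpos hH hH'c hHpos hEL
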